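/- For every ε ∈ (0, 1), consider n = 2 agents and m = 3 goods with additive valuations v_1 and v_2 determined by the singleton values v_1 = (0, 0, 0) and v_2 = (ε, ε, 1) on (g_1, g_2, g_3). The Envy-Graph Procedure (Mechanism 3) on the profile (v_1, v_2) outputs the allocation ({g_1, g_3}, {g_2}), giving agent 2 utility ε; whereas on the profile (v_1, v_2') with the additive misreport v_2' = (1, 0, 0), it outputs ({g_1}, {g_2, g_3}), giving agent 2 true utility 1 + ε. Consequently, for every α ≥ 1 there is an instance in which an agent improves his utility under Mechanism 3 by a factor exceeding α via misreporting; i.e., the Envy-Graph Procedure admits an infinite incentive ratio for additive valuations. -/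
import Mathlib


/-- A valuation: normalized and monotone set function on goods. -/
def IsValuation {m : ℕ} (v : Finset (Fin m) → ℝ) : Prop :=
  v ∅ = 0 ∧ ∀ S T : Finset (Fin m), S ⊆ T → v S ≤ v T

def AdditiveVal {m : ℕ} (v : Finset (Fin m) → ℝ) : Prop :=
  ∀ S T : Finset (Fin m), Disjoint S T → v (S ∪ T) = v S + v T

def SubadditiveVal {m : ℕ} (v : Finset (Fin m) → ℝ) : Prop :=
  ∀ S T : Finset (Fin m), v (S ∪ T) ≤ v S + v T

def CancelableVal {m : ℕ} (v : Finset (Fin m) → ℝ) : Prop :=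
  ∀ S T : Finset (Fin m), ∀ g : Fin m, g ∉ S ∪ T → v (insert g S) > v (insert g T) → v S > v T

def SubmodularVal {m : ℕ} (v : Finset (Fin m) → ℝ) : Prop :=
  ∀ S T : Finset (Fin m), S ⊆ T → ∀ g : Fin m, g ∉ T →
    v (insert g T) - v T ≤ v (insert g S) - v S

def MultiplicativeVal {m : ℕ} (v : Finset (Fin m) → ℝ) : Prop :=
  (∀ g : Fin m, 1 ≤ v {g}) ∧ ∀ S : Finset (Fin m), S.Nonempty → v S = ∏ g ∈ S, v {g}

def XOSVal {m : ℕ} (v : Finset (Fin m) → ℝ) : Prop :=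
  ∃ (k : ℕ) (f : Fin (k + 1) → Finset (Fin m) → ℝ),
    (∀ j, AdditiveVal (f j)) ∧
    ∀ S : Finset (Fin m), (∃ j, v S = f j S) ∧ ∀ j, f j S ≤ v S

def IsAllocation {n m : ℕ} (A : Fin n → Finset (Fin m)) : Prop :=
  (∀ i j : Fin n, i ≠ j → Disjoint (A i) (A j)) ∧ ∀ g : Fin m, ∃ i, g ∈ A i

/-- `α`-EF1. -/
def EF1 {n m : ℕ} (α : ℝ) (v : Fin n → Finset (Fin m) → ℝ) (A : Fin n → Finset (Fin m)) : Prop :=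
  ∀ i j : Fin n, A j = ∅ ∨ ∃ g ∈ A j, α * v i (A j \ {g}) ≤ v i (A i)

/-- The remaining good maximizing `f`, ties broken in favor of the smallest index. -/
noncomputable def chooseFavorite {m : ℕ} (f : Fin m → ℝ) (S : Finset (Fin m))
    (h : S.Nonempty) : Fin m :=
  (S.filter fun g => ∀ h' ∈ S, f h' ≤ f g).min' (by
    obtain ⟨b, hb, hmax⟩ := S.exists_max_image f h
    exact ⟨b, Finset.mem_filter.mpr ⟨hb, hmax⟩⟩)

/-- The state (bundles, remaining goods) of round-robin after `k` stages, where at stage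
`k+1` the agent `k % n` picks a remaining good maximizing `score i (current bundle of i)`,
ties broken towards the smallest index. -/
noncomputable def rrState {n m : ℕ} (score : Fin n → Finset (Fin m) → Fin m → ℝ) :
    ℕ → (Fin n → Finset (Fin m)) × Finset (Fin m)
  | 0 => (fun _ => (∅ : Finset (Fin m)), Finset.univ)
  | k + 1 =>
      let st := rrState score k
      if hn : 0 < n then
        if h : st.2.Nonempty then
          let i : Fin n := ⟨k % n, Nat.mod_lt k hn⟩
          let g := chooseFavorite (score i (st.1 i)) st.2 h
          (Function.update st.1 i (insert g (st.1 i)), st.2.erase g)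
        else st
      else st

/-- Mechanism 1: Round-Robin where each agent picks a remaining good of largest value. -/
noncomputable def roundRobin1 {n m : ℕ} (v : Fin n → Finset (Fin m) → ℝ) :
    Fin n → Finset (Fin m) :=
  (rrState (fun i _ g => v i {g}) m).1

/-- Mechanism 2: Round-Robin where each agent picks a remaining good of largest
marginal value with respect to his current bundle. -/
noncomputable def roundRobin2 {n m : ℕ} (v : Fin n → Finset (Fin m) → ℝ) :
    Fin n → Finset (Fin m) :=
  (rrState (fun i A g => v i (insert g A) - v i A) m).1

noncomputable def expTransform {m : ℕ} (δ : ℝ) (v : Finset (Fin m) → ℝ) :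
    Finset (Fin m) → ℝ :=
  fun S => if S = ∅ then 0 else Real.exp (δ * v S)

def addVal {m : ℕ} (w : Fin m → ℝ) : Finset (Fin m) → ℝ := fun S => ∑ g ∈ S, w g

def Envies {n m : ℕ} (v : Fin n → Finset (Fin m) → ℝ) (A : Fin n → Finset (Fin m))
    (i j : Fin n) : Prop :=
  v i (A i) < v i (A j)

def Unenvied {n m : ℕ} (v : Fin n → Finset (Fin m) → ℝ) (A : Fin n → Finset (Fin m))
    (j : Fin n) : Prop :=
  ∀ i : Fin n, ¬ Envies v A i j

def EnvyCycleStep {n m : ℕ} (v : Fin n → Finset (Fin m) → ℝ)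
    (A A' : Fin n → Finset (Fin m)) : Prop :=
  ∃ σ : Equiv.Perm (Fin n), σ.IsCycle ∧ (∀ i, σ i ≠ i → Envies v A i (σ i)) ∧
    ∀ i, A' i = A (σ i)

def HasEnvyCycle {n m : ℕ} (v : Fin n → Finset (Fin m) → ℝ)
    (A : Fin n → Finset (Fin m)) : Prop :=
  ∃ σ : Equiv.Perm (Fin n), σ.IsCycle ∧ ∀ i, σ i ≠ i → Envies v A i (σ i)

def Eliminated {n m : ℕ} (v : Fin n → Finset (Fin m) → ℝ)
    (A B : Fin n → Finset (Fin m)) : Prop :=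
  Relation.ReflTransGen (EnvyCycleStep v) A B ∧ ¬ HasEnvyCycle v B

inductive EGP {n m : ℕ} (v : Fin n → Finset (Fin m) → ℝ) :
    ℕ → (Fin n → Finset (Fin m)) → Prop
  | init : EGP v 0 (fun _ => ∅)
  | step {k : ℕ} (hk : k < m) {A C : Fin n → Finset (Fin m)} (j : Fin n) :
      EGP v k A → Unenvied v A j → (∀ j' : Fin n, Unenvied v A j' → j ≤ j') →
      Eliminated v (Function.update A j (insert ⟨k, hk⟩ (A j))) C →
      EGP v (k + 1) C

inductive EGP2 {n m : ℕ} (v : Fin n → Finset (Fin m) → ℝ) :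
    ℕ → (Fin n → Finset (Fin m)) → Finset (Fin m) → Prop
  | init : EGP2 v 0 (fun _ => ∅) Finset.univ
  | step {k : ℕ} {A C : Fin n → Finset (Fin m)} {S : Finset (Fin m)} (j : Fin n) (g : Fin m) :
      EGP2 v k A S → Unenvied v A j → (∀ j' : Fin n, Unenvied v A j' → j ≤ j') →
      g ∈ S → (∀ h ∈ S, v j {h} ≤ v j {g}) → (∀ h ∈ S, v j {g} ≤ v j {h} → g ≤ h) →
      Eliminated v (Function.update A j (insert g (A j))) C →
      EGP2 v (k + 1) C (S.erase g)

section Aux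

variable {m : ℕ}

lemma addVal_zero (S : Finset (Fin 3)) : addVal ![0,0,0] S = 0 := by
  apply Finset.sum_eq_zero
  intro g _
  fin_cases g <;> rfl

lemma no_envy_zero {v : Fin 2 → Finset (Fin 3) → ℝ} (h0 : ∀ S, v 0 S = 0)
    (A : Fin 2 → Finset (Fin 3)) (j : Fin 2) : ¬ Envies v A 0 j := by
  simp [Envies, h0]

lemma cycle_moves_zero (σ : Equiv.Perm (Fin 2)) (hσ : σ.IsCycle) : σ 0 ≠ 0 := by
  intro h
  obtain ⟨x, hx, -⟩ := hσ
  have h1 : σ 1 = 1 := by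
    have := σ.injective.ne (a₁ := (1:Fin 2)) (a₂ := 0) (by decide)
    rw [h] at this
    omega
  fin_cases x <;> simp_all

lemma no_cycle {v : Fin 2 → Finset (Fin 3) → ℝ} (h0 : ∀ S, v 0 S = 0)
    (A : Fin 2 → Finset (Fin 3)) : ¬ HasEnvyCycle v A := by
  rintro ⟨σ, hσ, h⟩
  exact no_envy_zero h0 A (σ 0) (h 0 (cycle_moves_zero σ hσ))

lemma no_step {v : Fin 2 → Finset (Fin 3) → ℝ} (h0 : ∀ S, v 0 S = 0)
    (A A' : Fin 2 → Finset (Fin 3)) : ¬ EnvyCycleStep v A A' := by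
  rintro ⟨σ, hσ, h, -⟩
  exact no_envy_zero h0 A (σ 0) (h 0 (cycle_moves_zero σ hσ))

lemma elim_eq {v : Fin 2 → Finset (Fin 3) → ℝ} (h0 : ∀ S, v 0 S = 0)
    {A C : Fin 2 → Finset (Fin 3)} (h : Eliminated v A C) : C = A := by
  obtain ⟨h1, -⟩ := h
  induction h1 with
  | refl => rfl
  | tail _ hstep ih => exact absurd hstep (no_step h0 _ _)

lemma elim_self {v : Fin 2 → Finset (Fin 3) → ℝ} (h0 : ∀ S, v 0 S = 0)
    (A : Fin 2 → Finset (Fin 3)) : Eliminated v A A :=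
  ⟨Relation.ReflTransGen.refl, no_cycle h0 A⟩

lemma EGP_succ_inv {v : Fin 2 → Finset (Fin 3) → ℝ} (h0 : ∀ S, v 0 S = 0)
    {k : ℕ} {C : Fin 2 → Finset (Fin 3)} (h : EGP v (k+1) C) :
    ∃ (A : Fin 2 → Finset (Fin 3)) (j : Fin 2) (hk : k < 3),
      EGP v k A ∧ Unenvied v A j ∧ (∀ j' : Fin 2, Unenvied v A j' → j ≤ j') ∧
      C = Function.update A j (insert ⟨k, hk⟩ (A j)) := by
  cases h with
  | step hk j hA hun hmin helim =>
    exact ⟨_, j, hk, hA, hun, hmin, (elim_eq h0 helim)⟩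

lemma EGP_zero_inv {v : Fin 2 → Finset (Fin 3) → ℝ}
    {C : Fin 2 → Finset (Fin 3)} (h : EGP v 0 C) : C = fun _ => ∅ := by
  cases h; rfl

end Aux
section Core

lemma egp_caseA (v2 : Finset (Fin 3) → ℝ) (hemp : v2 ∅ = 0) (hpos : 0 < v2 {0})
    (hle : v2 {0} ≤ v2 {1}) :
    (∀ A : Fin 2 → Finset (Fin 3), EGP ![addVal ![0,0,0], v2] 3 A →
      A = ![({0,2} : Finset (Fin 3)), {1}]) ∧
    EGP ![addVal ![0,0,0], v2] 3 ![({0,2} : Finset (Fin 3)), {1}] := by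
  set v : Fin 2 → Finset (Fin 3) → ℝ := ![addVal ![0,0,0], v2] with hv
  have h0 : ∀ S, v 0 S = 0 := fun S => addVal_zero S
  have hv1 : ∀ S, v 1 S = v2 S := fun S => rfl
  -- the allocations along the run
  set A0 : Fin 2 → Finset (Fin 3) := fun _ => ∅ with hA0
  set A1 : Fin 2 → Finset (Fin 3) :=
    Function.update A0 0 (insert (0 : Fin 3) (A0 0)) with hA1
  set A2 : Fin 2 → Finset (Fin 3) :=
    Function.update A1 1 (insert (1 : Fin 3) (A1 1)) with hA2
  set A3 : Fin 2 → Finset (Fin 3) :=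
    Function.update A2 0 (insert (2 : Fin 3) (A2 0)) with hA3
  have eA1 : A1 0 = {0} ∧ A1 1 = ∅ := by constructor <;> simp [hA1, hA0]
  have eA2 : A2 0 = {0} ∧ A2 1 = {1} := by
    constructor <;> simp [hA2, eA1.1, eA1.2]
  have eA3 : A3 = ![({0,2} : Finset (Fin 3)), {1}] := by
    funext i
    fin_cases i
    · show A3 0 = {0, 2}
      simp [hA3, eA2.1]; decide
    · show A3 1 = {1}
      simp [hA3, eA2.2]
  -- unenvied facts
  have hU0 : Unenvied v A0 0 := by
    intro i; simp [Envies, hA0]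
  have hNU1 : ¬ Unenvied v A1 0 := by
    intro h
    have := h 1
    simp [Envies, hv1, eA1.1, eA1.2, hemp] at this
    exact absurd hpos (not_lt.mpr this)
  have hU1 : Unenvied v A1 1 := by
    intro i
    fin_cases i
    · exact no_envy_zero h0 A1 1
    · simp [Envies]
  have hU2 : Unenvied v A2 0 := by
    intro i
    fin_cases i
    · exact no_envy_zero h0 A2 0
    · show ¬ Envies v A2 1 0
      simp [Envies, hv1, eA2.1, eA2.2]
      exact hle
  constructor
  · intro A h
    obtain ⟨B2, j3, hk3, h2, hun3, hmin3, hC3⟩ := EGP_succ_inv h0 h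
    obtain ⟨B1, j2, hk2, h1, hun2, hmin2, hC2⟩ := EGP_succ_inv h0 h2
    obtain ⟨B0, j1, hk1, h0', hun1, hmin1, hC1⟩ := EGP_succ_inv h0 h1
    have hB0 : B0 = A0 := EGP_zero_inv h0'
    subst hB0
    have hj1 : j1 = 0 := le_antisymm (hmin1 0 hU0) (Fin.zero_le _)
    subst hj1
    have hB1 : B1 = A1 := hC1
    subst hB1
    have hj2 : j2 = 1 := by
      fin_cases j2
      · exact absurd hun2 hNU1
      · rfl
    subst hj2
    have hB2 : B2 = A2 := hC2
    subst hB2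
    have hj3 : j3 = 0 := le_antisymm (hmin3 0 hU2) (Fin.zero_le _)
    subst hj3
    exact hC3.trans eA3
  · rw [← eA3]
    refine EGP.step (by omega) 0 ?_ hU2 (fun j' _ => Fin.zero_le _) ?_
    · refine EGP.step (by omega) 1 ?_ hU1 ?_ ?_
      · refine EGP.step (by omega) 0 EGP.init hU0 (fun j' _ => Fin.zero_le _) ?_
        exact elim_self h0 _
      · intro j' hj'
        fin_cases j'
        · exact absurd hj' hNU1
        · exact le_refl _
      · exact elim_self h0 _
    · exact elim_self h0 _

end Core

section CoreB

lemma egp_caseB (v2 : Finset (Fin 3) → ℝ) (hemp : v2 ∅ = 0) (hpos : 0 < v2 {0})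
    (hlt : v2 {1} < v2 {0}) :
    (∀ A : Fin 2 → Finset (Fin 3), EGP ![addVal ![0,0,0], v2] 3 A →
      A = ![({0} : Finset (Fin 3)), {1,2}]) ∧
    EGP ![addVal ![0,0,0], v2] 3 ![({0} : Finset (Fin 3)), {1,2}] := by
  set v : Fin 2 → Finset (Fin 3) → ℝ := ![addVal ![0,0,0], v2] with hv
  have h0 : ∀ S, v 0 S = 0 := fun S => addVal_zero S
  have hv1 : ∀ S, v 1 S = v2 S := fun S => rfl
  set A0 : Fin 2 → Finset (Fin 3) := fun _ => ∅ with hA0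
  set A1 : Fin 2 → Finset (Fin 3) :=
    Function.update A0 0 (insert (0 : Fin 3) (A0 0)) with hA1
  set A2 : Fin 2 → Finset (Fin 3) :=
    Function.update A1 1 (insert (1 : Fin 3) (A1 1)) with hA2
  set A3 : Fin 2 → Finset (Fin 3) :=
    Function.update A2 1 (insert (2 : Fin 3) (A2 1)) with hA3
  have eA1 : A1 0 = {0} ∧ A1 1 = ∅ := by constructor <;> simp [hA1, hA0]
  have eA2 : A2 0 = {0} ∧ A2 1 = {1} := by
    constructor <;> simp [hA2, eA1.1, eA1.2]
  have eA3 : A3 = ![({0} : Finset (Fin 3)), {1,2}] := by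
    funext i
    fin_cases i
    · show A3 0 = {0}
      simp [hA3, eA2.1]
    · show A3 1 = {1, 2}
      simp [hA3, eA2.2]; decide
  have hU0 : Unenvied v A0 0 := by
    intro i; simp [Envies, hA0]
  have hNU1 : ¬ Unenvied v A1 0 := by
    intro h
    have := h 1
    simp [Envies, hv1, eA1.1, eA1.2, hemp] at this
    exact absurd hpos (not_lt.mpr this)
  have hU1 : Unenvied v A1 1 := by
    intro i
    fin_cases i
    · exact no_envy_zero h0 A1 1
    · simp [Envies]
  have hNU2 : ¬ Unenvied v A2 0 := by
    intro h
    have := h 1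
    simp [Envies, hv1, eA2.1, eA2.2] at this
    exact absurd hlt (not_lt.mpr this)
  have hU2 : Unenvied v A2 1 := by
    intro i
    fin_cases i
    · exact no_envy_zero h0 A2 1
    · simp [Envies]
  constructor
  · intro A h
    obtain ⟨B2, j3, hk3, h2, hun3, hmin3, hC3⟩ := EGP_succ_inv h0 h
    obtain ⟨B1, j2, hk2, h1, hun2, hmin2, hC2⟩ := EGP_succ_inv h0 h2
    obtain ⟨B0, j1, hk1, h0', hun1, hmin1, hC1⟩ := EGP_succ_inv h0 h1
    have hB0 : B0 = A0 := EGP_zero_inv h0'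
    subst hB0
    have hj1 : j1 = 0 := le_antisymm (hmin1 0 hU0) (Fin.zero_le _)
    subst hj1
    have hB1 : B1 = A1 := hC1
    subst hB1
    have hj2 : j2 = 1 := by
      fin_cases j2
      · exact absurd hun2 hNU1
      · rfl
    subst hj2
    have hB2 : B2 = A2 := hC2
    subst hB2
    have hj3 : j3 = 1 := by
      fin_cases j3
      · exact absurd hun3 hNU2
      · rfl
    subst hj3
    exact hC3.trans eA3
  · rw [← eA3]
    refine EGP.step (by omega) 1 ?_ hU2 ?_ ?_
    · refine EGP.step (by omega) 1 ?_ hU1 ?_ ?_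
      · refine EGP.step (by omega) 0 EGP.init hU0 (fun j' _ => Fin.zero_le _) ?_
        exact elim_self h0 _
      · intro j' hj'
        fin_cases j'
        · exact absurd hj' hNU1
        · exact le_refl _
      · exact elim_self h0 _
    · intro j' hj'
      fin_cases j'
      · exact absurd hj' hNU2
      · exact le_refl _
    · exact elim_self h0 _

end CoreB
section Final

lemma addVal_isValuation (w : Fin 3 → ℝ) (hw : ∀ g, 0 ≤ w g) : IsValuation (addVal w) :=
  ⟨Finset.sum_empty, fun _ _ hST =>
    Finset.sum_le_sum_of_subset_of_nonneg hST (fun g _ _ => hw g)⟩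

lemma addVal_additive (w : Fin 3 → ℝ) : AdditiveVal (addVal w) :=
  fun _ _ h => Finset.sum_union h

lemma addVal_sing0 (a b c : ℝ) : addVal ![a,b,c] ({0} : Finset (Fin 3)) = a := by
  simp [addVal]

lemma addVal_sing1 (a b c : ℝ) : addVal ![a,b,c] ({1} : Finset (Fin 3)) = b := by
  simp [addVal]

lemma addVal_12 (a b c : ℝ) : addVal ![a,b,c] ({1,2} : Finset (Fin 3)) = b + c := by
  rw [addVal, Finset.sum_pair (by decide)]
  simp

lemma update_pair (v0 v2 v' : Finset (Fin 3) → ℝ) :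
    Function.update ![v0, v2] 1 v' = ![v0, v'] := by
  funext i
  fin_cases i <;> simp [Function.update]

end Final
/-- For every ε ∈ (0, 1): on the instance with n = 2 agents, m = 3 goods, and additive
valuations v₁ = (0,0,0), v₂ = (ε,ε,1), every run of the Envy-Graph Procedure
(Mechanism 3) outputs ({g₁, g₃}, {g₂}), giving agent 2 utility ε, while with the
misreport v₂' = (1,0,0) it outputs ({g₁}, {g₂, g₃}), giving agent 2 true utility 1 + ε.
Consequently, for every α ≥ 1 some agent on some additive instance can improve his
utility under Mechanism 3 by a factor exceeding α, i.e., the Envy-Graph Procedure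
admits an infinite incentive ratio for additive valuations. -/
theorem envyGraph_infinite_incentive_ratio :
    (∀ ε : ℝ, 0 < ε → ε < 1 →
      (∀ A : Fin 2 → Finset (Fin 3),
        EGP ![addVal ![0, 0, 0], addVal ![ε, ε, 1]] 3 A →
          A = ![({0, 2} : Finset (Fin 3)), ({1} : Finset (Fin 3))]) ∧
      (∀ A : Fin 2 → Finset (Fin 3),
        EGP ![addVal ![0, 0, 0], addVal ![1, 0, 0]] 3 A →
          A = ![({0} : Finset (Fin 3)), ({1, 2} : Finset (Fin 3))]) ∧
      addVal ![ε, ε, 1] ({1} : Finset (Fin 3)) = ε ∧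
      addVal ![ε, ε, 1] ({1, 2} : Finset (Fin 3)) = 1 + ε) ∧
    (∀ α : ℝ, 1 ≤ α →
      ∃ (v : Fin 2 → Finset (Fin 3) → ℝ) (i : Fin 2) (v' : Finset (Fin 3) → ℝ)
        (A A' : Fin 2 → Finset (Fin 3)),
        (∀ j, IsValuation (v j) ∧ AdditiveVal (v j)) ∧
        IsValuation v' ∧ AdditiveVal v' ∧
        EGP v 3 A ∧ EGP (Function.update v i v') 3 A' ∧
        α * v i (A i) < v i (A' i)) := by
  constructor
  · intro ε hε0 hε1
    refine ⟨?_, ?_, ?_, ?_⟩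
    · exact (egp_caseA (addVal ![ε,ε,1]) Finset.sum_empty
        (by rw [addVal_sing0]; exact hε0) (by rw [addVal_sing0, addVal_sing1])).1
    · exact (egp_caseB (addVal ![1,0,0]) Finset.sum_empty
        (by rw [addVal_sing0]; norm_num) (by rw [addVal_sing0, addVal_sing1]; norm_num)).1
    · exact addVal_sing1 ε ε 1
    · rw [addVal_12]; ring
  · intro α hα
    have hα0 : 0 < α := lt_of_lt_of_le one_pos hα
    set ε : ℝ := 1 / (2 * α) with hεdef
    have hε0 : 0 < ε := by positivity
    have hε1 : ε < 1 := by
      rw [hεdef, div_lt_one (by positivity)]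
      linarith
    refine ⟨![addVal ![0,0,0], addVal ![ε,ε,1]], 1, addVal ![1,0,0],
      ![({0,2} : Finset (Fin 3)), {1}], ![({0} : Finset (Fin 3)), {1,2}],
      ?_, ?_, addVal_additive _, ?_, ?_, ?_⟩
    · intro j
      fin_cases j
      · exact ⟨addVal_isValuation _ (by intro g; fin_cases g <;> norm_num),
          addVal_additive _⟩
      · exact ⟨addVal_isValuation _ (by intro g; fin_cases g <;> simp <;> linarith),
          addVal_additive _⟩
    · exact addVal_isValuation _ (by intro g; fin_cases g <;> norm_num)
    · exact (egp_caseA (addVal ![ε,ε,1]) Finset.sum_empty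
        (by rw [addVal_sing0]; exact hε0) (by rw [addVal_sing0, addVal_sing1])).2
    · rw [update_pair]
      exact (egp_caseB (addVal ![1,0,0]) Finset.sum_empty
        (by rw [addVal_sing0]; norm_num) (by rw [addVal_sing0, addVal_sing1]; norm_num)).2
    · show α * addVal ![ε,ε,1] {1} < addVal ![ε,ε,1] ({1,2} : Finset (Fin 3))
      rw [addVal_sing1, addVal_12, hεdef]
      rw [mul_one_div]
      have h1 : α / (2 * α) = 1 / 2 := by
        rw [div_eq_iff (by positivity)]
        ring
      rw [h1]
      have : (0:ℝ) < 1 / (2 * α) := by positivity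
      linarith
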